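/- arXiv:1401.3355 — 3 statements merged into one kernel-verified Lean document; each statement's English description precedes it below -/
import Mathlib

section
/- Let M ⊆ N be von Neumann algebras with a faithful normal conditional expectation E: N → M. If K is a convex subset of N that is closed in the Bures topology (the topology generated by the seminorms x ↦ φ(E(x*x))^{1/2} for normal states φ on M), then K is closed in the weak* topology on N. -/
/- STATEMENT 0: Let M ⊆ N be von Neumann algebras with a faithful normal conditional
expectation E : N → M.  If K is a convex subset of N that is closed in the Bures topology
(generated by the seminorms x ↦ φ(E(x*x))^{1/2} for normal states φ), then K is closed in
the weak* (σ-weak) topology on N. -/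

noncomputable section

/-- The σ-weak (weak-*) topology on `B(H)`: the initial topology for the functionals
`T ↦ ∑' n, ⟪T ξₙ, ηₙ⟫` with `∑ ‖ξₙ‖² < ∞` and `∑ ‖ηₙ‖² < ∞`. -/
def sigmaWeak (H : Type*) [NormedAddCommGroup H] [InnerProductSpace ℂ H] :
    TopologicalSpace (H →L[ℂ] H) :=
  ⨅ p : { q : (ℕ → H) × (ℕ → H) //
      Summable (fun n => ‖q.1 n‖ ^ 2) ∧ Summable (fun n => ‖q.2 n‖ ^ 2) },
    TopologicalSpace.induced
      (fun T : H →L[ℂ] H => ∑' n, (inner ℂ (T (p.1.1 n)) (p.1.2 n) : ℂ)) inferInstance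

/-- A normal state on `B(H)` (its restrictions to a von Neumann subalgebra `M` are exactly
the normal states of `M`). -/
structure NormalState (H : Type*) [NormedAddCommGroup H] [InnerProductSpace ℂ H]
    [CompleteSpace H] where
  toLin : (H →L[ℂ] H) →ₗ[ℂ] ℂ
  map_one' : toLin 1 = 1
  pos_re' : ∀ x, 0 ≤ (toLin (star x * x)).re
  pos_im' : ∀ x, (toLin (star x * x)).im = 0
  normal' : @Continuous _ _ (sigmaWeak H) _ toLin

/-! Normality of `E` and of the states makes `v ↦ φ (E (v⋆ v))` a σ-weakly continuous functional,
so it is dominated by finitely many of the functionals defining the σ-weak topology, and hence by a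
single σ-strong seminorm `v ↦ ∑ ‖v Zₙ‖²`: a Bures-closed set is σ-strongly closed. That seminorm is
`‖Φ v‖²` for `Φ v = (v Zₙ)ₙ ∈ ℓ²(H)`, and `Φ` is continuous from the σ-weak topology to the weak
topology of `ℓ²(H)`. Weak and norm closures of convex sets in `ℓ²(H)` agree, so a σ-weak limit of
points of a convex set is also a σ-strong limit of such points. -/

lemma memℓp_two_iff_summable {ι E : Type*} [NormedAddCommGroup E] {f : ι → E} :
    Memℓp f 2 ↔ Summable fun i => ‖f i‖ ^ 2 := by
  simpa using memℓp_gen_iff (p := 2) (f := f) (by norm_num)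

namespace SigmaWeak

variable {H : Type*} [NormedAddCommGroup H] [InnerProductSpace ℂ H]

-- the square of a σ-strong seminorm
def sqSum (Z : ℕ → H) (v : H →L[ℂ] H) : ℝ := ∑' n, ‖v (Z n)‖ ^ 2

lemma summable_norm_apply_sq {Z : ℕ → H} (hZ : Summable fun n => ‖Z n‖ ^ 2) (v : H →L[ℂ] H) :
    Summable fun n => ‖v (Z n)‖ ^ 2 :=
  (hZ.mul_left (‖v‖ ^ 2)).of_nonneg_of_le (fun _ => by positivity) fun n => by
    rw [← mul_pow]; gcongr; exact v.le_opNorm _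

def evalSeq (Z : ℕ → H) (hZ : Summable fun n => ‖Z n‖ ^ 2) :
    (H →L[ℂ] H) →ₗ[ℂ] lp (fun _ : ℕ => H) 2 where
  toFun v := ⟨fun n => v (Z n), memℓp_two_iff_summable.mpr (summable_norm_apply_sq hZ v)⟩
  map_add' _ _ := rfl
  map_smul' _ _ := rfl

lemma norm_evalSeq_sq {Z : ℕ → H} (hZ : Summable fun n => ‖Z n‖ ^ 2) (v : H →L[ℂ] H) :
    ‖evalSeq Z hZ v‖ ^ 2 = sqSum Z v := by
  have h := lp.norm_rpow_eq_tsum (p := 2) (by norm_num) (evalSeq Z hZ v)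
  simp only [ENNReal.toReal_ofNat, Real.rpow_two] at h
  exact h

lemma sqSum_nonneg (Z : ℕ → H) (v : H →L[ℂ] H) : 0 ≤ sqSum Z v :=
  tsum_nonneg fun _ => by positivity

lemma exists_sqSum_eq_add {Z₁ Z₂ : ℕ → H} (hZ₁ : Summable fun n => ‖Z₁ n‖ ^ 2)
    (hZ₂ : Summable fun n => ‖Z₂ n‖ ^ 2) :
    ∃ Z : ℕ → H, Summable (fun n => ‖Z n‖ ^ 2) ∧ sqSum Z = sqSum Z₁ + sqSum Z₂ := by
  -- forgetting the concrete equivalence keeps unification from unfolding it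
  obtain ⟨e⟩ : Nonempty (ℕ ≃ ℕ ⊕ ℕ) := ⟨Equiv.natSumNatEquivNat.symm⟩
  have hsum : Summable fun s => ‖Sum.elim Z₁ Z₂ s‖ ^ 2 := Summable.sum _ hZ₁ hZ₂
  refine ⟨Sum.elim Z₁ Z₂ ∘ e, e.summable_iff.mpr hsum, funext fun v => ?_⟩
  exact (e.tsum_eq (fun s => ‖v (Sum.elim Z₁ Z₂ s)‖ ^ 2)).trans
      (Summable.tsum_sum (summable_norm_apply_sq hZ₁ v) (summable_norm_apply_sq hZ₂ v))

lemma sqSum_smul (c : ℂ) (Z : ℕ → H) : sqSum (c • Z) = ‖c‖ ^ 2 • sqSum Z := by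
  ext v
  simp [sqSum, norm_smul, mul_pow, tsum_mul_left]

variable (H) in
def sqSumCone : PointedCone ℝ ((H →L[ℂ] H) → ℝ) where
  carrier := {Q | ∃ Z : ℕ → H, Summable (fun n => ‖Z n‖ ^ 2) ∧ sqSum Z = Q}
  zero_mem' := ⟨0, by simp, by ext; simp [sqSum]⟩
  add_mem' := by
    rintro _ _ ⟨Z₁, hZ₁, rfl⟩ ⟨Z₂, hZ₂, rfl⟩
    exact exists_sqSum_eq_add hZ₁ hZ₂
  smul_mem' := by
    rintro ⟨c, hc⟩ _ ⟨Z, hZ, rfl⟩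
    refine ⟨(√c : ℂ) • Z, ?_, ?_⟩
    · simpa [norm_smul, mul_pow, Real.sq_sqrt hc] using hZ.mul_left c
    · rw [sqSum_smul, Complex.norm_real, Real.norm_eq_abs, sq_abs, Real.sq_sqrt hc]
      rfl

lemma sqSum_mem_sqSumCone {Z : ℕ → H} (hZ : Summable fun n => ‖Z n‖ ^ 2) :
    sqSum Z ∈ sqSumCone H :=
  ⟨Z, hZ, rfl⟩

lemma nonneg_of_mem_sqSumCone {Q : (H →L[ℂ] H) → ℝ} (hQ : Q ∈ sqSumCone H) (v : H →L[ℂ] H) :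
    0 ≤ Q v := by
  obtain ⟨Z, -, rfl⟩ := hQ
  exact sqSum_nonneg Z v

variable (H) in
abbrev Index := { q : (ℕ → H) × (ℕ → H) //
      Summable (fun n => ‖q.1 n‖ ^ 2) ∧ Summable (fun n => ‖q.2 n‖ ^ 2) }

instance : Nonempty (Index H) := ⟨⟨(0, 0), by simp, by simp⟩⟩

def pairing (p : Index H) : (H →L[ℂ] H) →ₗ⋆[ℂ] ℂ :=
  ((innerₛₗ ℂ).flip ⟨p.1.2, memℓp_two_iff_summable.mpr p.2.2⟩).comp (evalSeq p.1.1 p.2.1)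

lemma pairing_apply (p : Index H) (T : H →L[ℂ] H) :
    pairing p T = ∑' n, inner ℂ (T (p.1.1 n)) (p.1.2 n) :=
  lp.inner_eq_tsum _ _

lemma sigmaWeak_eq_iInf : sigmaWeak H = ⨅ p, .induced (pairing p) inferInstance := by
  simp only [sigmaWeak, ← pairing_apply]

lemma continuous_pairing (p : Index H) : @Continuous _ _ (sigmaWeak H) _ (pairing p) := by
  rw [sigmaWeak_eq_iInf]
  exact continuous_iInf_dom continuous_induced_dom

variable (H) in
def seminormFamily : SeminormFamily ℂ (H →L[ℂ] H) (Σ _ : Index H, Fin 1) :=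
  SeminormFamily.sigma fun p => SeminormFamily.comp (fun _ => normSeminorm ℂ ℂ) (pairing p)

lemma seminormFamily_apply (i : Σ _ : Index H, Fin 1) (T : H →L[ℂ] H) :
    seminormFamily H i T = ‖pairing i.1 T‖ := rfl

lemma withSeminorms_sigmaWeak : WithSeminorms (topology := sigmaWeak H) (seminormFamily H) := by
  rw [sigmaWeak_eq_iInf]
  exact withSeminorms_iInf fun p => (pairing p).withSeminorms_induced (norm_withSeminorms ℂ ℂ)

variable [CompleteSpace H]

lemma pairing_star_mul_self (p : Index H) (v : H →L[ℂ] H) :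
    pairing p (star v * v) = inner ℂ (evalSeq p.1.1 p.2.1 v) (evalSeq p.1.2 p.2.2 v) := by
  rw [pairing_apply, lp.inner_eq_tsum]
  congr with n
  exact v.adjoint_inner_left _ _

lemma norm_pairing_star_mul_self_le (p : Index H) (v : H →L[ℂ] H) :
    ‖pairing p (star v * v)‖ ≤ sqSum p.1.1 v + sqSum p.1.2 v := by
  rw [pairing_star_mul_self, ← norm_evalSeq_sq p.2.1, ← norm_evalSeq_sq p.2.2]
  refine (norm_inner_le_norm _ _).trans ?_
  nlinarith [two_mul_le_add_sq ‖evalSeq p.1.1 p.2.1 v‖ ‖evalSeq p.1.2 p.2.2 v‖,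
    norm_nonneg (evalSeq p.1.1 p.2.1 v), norm_nonneg (evalSeq p.1.2 p.2.2 v)]

theorem exists_sqSumCone_bound_of_continuous (ψ : (H →L[ℂ] H) →ₗ[ℂ] ℂ)
    (hψ : @Continuous _ _ (sigmaWeak H) _ ψ) :
    ∃ Q ∈ sqSumCone H, ∀ v, ‖ψ (star v * v)‖ ≤ Q v := by
  obtain ⟨s, C, -, hC⟩ := Seminorm.bound_of_continuous (t := sigmaWeak H)
    withSeminorms_sigmaWeak ((normSeminorm ℂ ℂ).comp ψ)
    (@Continuous.norm _ _ _ (sigmaWeak H) _ hψ)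
  refine ⟨(C : ℝ) • ∑ i ∈ s, (sqSum i.1.1.1 + sqSum i.1.1.2), ?_, fun v => ?_⟩
  · exact PointedCone.smul_mem _ C.2 (sum_mem fun i _ =>
      add_mem (sqSum_mem_sqSumCone i.1.2.1) (sqSum_mem_sqSumCone i.1.2.2))
  · calc ‖ψ (star v * v)‖ ≤ C * s.sup (seminormFamily H) (star v * v) := hC _
      _ ≤ C * ∑ i ∈ s, ‖pairing i.1 (star v * v)‖ := by
        gcongr
        refine (Seminorm.finset_sup_le_sum _ _ _).trans_eq ?_
        simp [seminormFamily_apply]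
      _ ≤ C * ∑ i ∈ s, (sqSum i.1.1.1 v + sqSum i.1.1.2 v) := by
        gcongr with i; exact norm_pairing_star_mul_self_le _ _
      _ = _ := by simp [Finset.sum_apply]

lemma continuous_toWeakSpace_evalSeq {Z : ℕ → H} (hZ : Summable fun n => ‖Z n‖ ^ 2) :
    @Continuous _ _ (sigmaWeak H) _ fun v => toWeakSpace ℂ _ (evalSeq Z hZ v) := by
  -- a local instance, found before the norm topology of `H →L[ℂ] H`
  let _ := sigmaWeak H
  refine WeakBilin.continuous_of_continuous_eval _ fun f => ?_
  set g := (InnerProductSpace.toDual ℂ (lp (fun _ : ℕ => H) 2)).symm f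
  let p : Index H := ⟨(Z, g), hZ, memℓp_two_iff_summable.mp g.2⟩
  have hfg : ∀ v, f (evalSeq Z hZ v) = starRingEnd ℂ (pairing p v) := fun v => by
    rw [← InnerProductSpace.toDual_symm_apply, ← inner_conj_symm]
    rfl
  exact (Complex.continuous_conj.comp (continuous_pairing p)).congr fun v => (hfg v).symm

theorem exists_sqSum_sub_lt_of_mem_closure {K : Set (H →L[ℂ] H)} (hK : Convex ℝ K)
    {x₀ : H →L[ℂ] H} (hx₀ : x₀ ∈ @closure _ (sigmaWeak H) K)
    {Z : ℕ → H} (hZ : Summable fun n => ‖Z n‖ ^ 2) {ε : ℝ} (hε : 0 < ε) :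
    ∃ y ∈ K, sqSum Z (y - x₀) < ε := by
  let _ := sigmaWeak H
  set Φ := evalSeq Z hZ
  have hweak : toWeakSpace ℂ _ (Φ x₀) ∈ closure (toWeakSpace ℂ _ '' (Φ '' K)) :=
    map_mem_closure (f := fun v => toWeakSpace ℂ _ (Φ v)) (continuous_toWeakSpace_evalSeq hZ) hx₀
      fun y hy => ⟨Φ y, Set.mem_image_of_mem Φ hy, rfl⟩
  have hΦK : Convex ℝ (Φ '' K) := hK.linear_image (Φ.restrictScalars ℝ)
  rw [← hΦK.toWeakSpace_closure ℂ] at hweak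
  obtain ⟨w, hw, hwx₀⟩ := hweak
  obtain ⟨_, ⟨y, hy, rfl⟩, hdist⟩ :=
    Metric.mem_closure_iff.mp ((toWeakSpace ℂ _).injective hwx₀ ▸ hw) (√ε) (Real.sqrt_pos.mpr hε)
  refine ⟨y, hy, ?_⟩
  rw [← norm_evalSeq_sq hZ, map_sub, ← dist_eq_norm', ← Real.lt_sqrt dist_nonneg]
  exact hdist

end SigmaWeak

open SigmaWeak in
theorem bures_closed_convex_is_weakStar_closed_general
    {H : Type*} [NormedAddCommGroup H] [InnerProductSpace ℂ H] [CompleteSpace H]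
    (N : VonNeumannAlgebra H)
    (E : (H →L[ℂ] H) →ₗ[ℂ] (H →L[ℂ] H))
    -- `E` is normal (σ-weakly continuous):
    (hnormal : @Continuous _ _ (sigmaWeak H) (sigmaWeak H) E)
    (K : Set (H →L[ℂ] H)) (hKN : K ⊆ N)
    -- `K` is convex:
    (hconv : ∀ x ∈ K, ∀ y ∈ K, ∀ t : ℝ, 0 ≤ t → t ≤ 1 →
        ((t : ℂ) • x + ((1 - t : ℝ) : ℂ) • y) ∈ K)
    -- `K` is closed in the Bures topology of the inclusion `M ⊆ N`:
    (hB : ∀ x₀ ∈ (N : Set (H →L[ℂ] H)), x₀ ∉ K →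
        ∃ (n : ℕ) (φ : Fin n → NormalState H) (ε : ℝ), 0 < ε ∧
          ∀ y ∈ (N : Set (H →L[ℂ] H)),
            (∀ i, ((φ i).toLin (E (star (y - x₀) * (y - x₀)))).re < ε ^ 2) → y ∉ K) :
    -- then `K` is weak*-closed in `N`:
    ∀ x₀ ∈ (N : Set (H →L[ℂ] H)), x₀ ∈ @closure _ (sigmaWeak H) K → x₀ ∈ K := by
  intro x₀ hx₀N hx₀
  by_contra hx₀K
  obtain ⟨n, φ, ε, hε, hfar⟩ := hB x₀ hx₀N hx₀K
  have hKconv : Convex ℝ K := fun x hx y hy a b ha hb hab => by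
    obtain rfl : b = 1 - a := by linarith
    simpa only [Complex.coe_smul] using hconv x hx y hy a ha (by linarith)
  have hbound (i : Fin n) : ∃ Q ∈ sqSumCone H, ∀ v, ‖(φ i).toLin (E (star v * v))‖ ≤ Q v :=
    exists_sqSumCone_bound_of_continuous ((φ i).toLin ∘ₗ E)
      (@Continuous.comp _ _ _ (sigmaWeak H) (sigmaWeak H) _ E (φ i).toLin (φ i).normal' hnormal)
  choose Q hQ hφQ using hbound
  obtain ⟨Z, hZ, hZQ⟩ : ∑ i, Q i ∈ sqSumCone H := sum_mem fun i _ => hQ i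
  obtain ⟨y, hyK, hy⟩ := exists_sqSum_sub_lt_of_mem_closure hKconv hx₀ hZ (pow_pos hε 2)
  obtain ⟨i, hi⟩ : ∃ i, ε ^ 2 ≤ ((φ i).toLin (E (star (y - x₀) * (y - x₀)))).re := by
    by_contra! h
    exact hfar y (hKN hyK) h hyK
  refine hy.not_ge (calc
    ε ^ 2 ≤ ((φ i).toLin (E (star (y - x₀) * (y - x₀)))).re := hi
    _ ≤ ‖(φ i).toLin (E (star (y - x₀) * (y - x₀)))‖ := Complex.re_le_norm _
    _ ≤ Q i (y - x₀) := hφQ i _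
    _ ≤ ∑ j, Q j (y - x₀) :=
        Finset.single_le_sum (fun j _ => nonneg_of_mem_sqSumCone (hQ j) _) (Finset.mem_univ i)
    _ = sqSum Z (y - x₀) := by rw [hZQ, Finset.sum_apply])

theorem bures_closed_convex_is_weakStar_closed
    {H : Type*} [NormedAddCommGroup H] [InnerProductSpace ℂ H] [CompleteSpace H]
    (M N : VonNeumannAlgebra H) (hMN : (M : Set (H →L[ℂ] H)) ⊆ N)
    (E : (H →L[ℂ] H) →ₗ[ℂ] (H →L[ℂ] H))
    -- `E` is a conditional expectation of `N` onto `M`: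
    (hrange : ∀ x ∈ N, E x ∈ M)
    (hid : ∀ m ∈ M, E m = m)
    (hcontr : ∀ x ∈ N, ‖E x‖ ≤ ‖x‖)
    (hbimod : ∀ m₁ ∈ M, ∀ m₂ ∈ M, ∀ x ∈ N, E (m₁ * x * m₂) = m₁ * E x * m₂)
    (hpos : ∀ x ∈ N, (E (star x * x)).IsPositive)
    -- `E` is faithful:
    (hfaithful : ∀ x ∈ N, E (star x * x) = 0 → x = 0)
    -- `E` is normal (σ-weakly continuous):
    (hnormal : @Continuous _ _ (sigmaWeak H) (sigmaWeak H) E)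
    (K : Set (H →L[ℂ] H)) (hKN : K ⊆ N)
    -- `K` is convex:
    (hconv : ∀ x ∈ K, ∀ y ∈ K, ∀ t : ℝ, 0 ≤ t → t ≤ 1 →
        ((t : ℂ) • x + ((1 - t : ℝ) : ℂ) • y) ∈ K)
    -- `K` is closed in the Bures topology of the inclusion `M ⊆ N`:
    (hB : ∀ x₀ ∈ (N : Set (H →L[ℂ] H)), x₀ ∉ K →
        ∃ (n : ℕ) (φ : Fin n → NormalState H) (ε : ℝ), 0 < ε ∧
          ∀ y ∈ (N : Set (H →L[ℂ] H)),
            (∀ i, ((φ i).toLin (E (star (y - x₀) * (y - x₀)))).re < ε ^ 2) → y ∉ K) :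
    -- then `K` is weak*-closed in `N`:
    ∀ x₀ ∈ (N : Set (H →L[ℂ] H)), x₀ ∈ @closure _ (sigmaWeak H) K → x₀ ∈ K :=
  bures_closed_convex_is_weakStar_closed_general N E hnormal K hKN hconv hB
end
end

section
/- Let α be a *-automorphism of a von Neumann algebra Q and let a, b, c, d ∈ Q satisfy a x b = c α(x) d for all x ∈ Q. If there exists x₀ ∈ Q with a x₀ b ≠ 0, then α is not properly outer, i.e., there exists a nonzero t ∈ Q with t x = α(x) t for all x ∈ Q. -/
/-!
Let `K ⊆ H ⊕ H` be the closed span of the vectors `(x b ξ, α(x) d ξ)` with `x ∈ Q`, `ξ ∈ H`.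
It is invariant under `diag(x, α x)` for `x ∈ Q` and under `diag(g, g)` for `g ∈ Q'`, and these
families are closed under adjoints, so the orthogonal projection `P` onto `K` commutes with
them. Hence the lower-left entry `t` of `P`, viewed as a `2 × 2` operator matrix, lies in
`Q'' = Q` and satisfies `t x = α(x) t`. If `t = 0`, then so is its adjoint, the upper-right
entry, so `P` is diagonal and `(x₀ b ξ, 0) ∈ K`; since `a u = c v` for all `(u, v) ∈ K`, this
forces `a x₀ b = 0`.
-/

open Module.End ContinuousLinearMap
open scoped InnerProductSpace

namespace WithLp

variable {𝕜 E F : Type*} [RCLike 𝕜] [NormedAddCommGroup E] [InnerProductSpace 𝕜 E]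
  [NormedAddCommGroup F] [InnerProductSpace 𝕜 F]

noncomputable def inlL : E →L[𝕜] WithLp 2 (E × F) :=
  (prodContinuousLinearEquiv 2 𝕜 E F).symm.toContinuousLinearMap ∘L .inl 𝕜 E F

noncomputable def prodMapL (s : E →L[𝕜] E) (r : F →L[𝕜] F) :
    WithLp 2 (E × F) →L[𝕜] WithLp 2 (E × F) :=
  (prodContinuousLinearEquiv 2 𝕜 E F).symm.toContinuousLinearMap ∘L s.prodMap r ∘L
    (prodContinuousLinearEquiv 2 𝕜 E F).toContinuousLinearMap

@[simp] lemma prodMapL_apply (s : E →L[𝕜] E) (r : F →L[𝕜] F) (u : E) (v : F) :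
    prodMapL s r (toLp 2 (u, v)) = toLp 2 (s u, r v) := rfl

@[simp] lemma snd_prodMapL (s : E →L[𝕜] E) (r : F →L[𝕜] F) (x : WithLp 2 (E × F)) :
    (prodMapL s r x).snd = r x.snd := rfl

lemma adjoint_prodMapL [CompleteSpace E] [CompleteSpace F] (s : E →L[𝕜] E) (r : F →L[𝕜] F) :
    (prodMapL s r).adjoint = prodMapL s.adjoint r.adjoint := by
  refine ((eq_adjoint_iff _ _).2 fun x y => ?_).symm
  simp [prodMapL, adjoint_inner_left]

end WithLp

open WithLp

namespace Submodule

variable {𝕜 E F : Type*} [RCLike 𝕜] [NormedAddCommGroup E] [InnerProductSpace 𝕜 E]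
  [NormedAddCommGroup F] [InnerProductSpace 𝕜 F]

lemma commute_starProjection_of_mem_invtSubmodule {G : Type*} [NormedAddCommGroup G]
    [InnerProductSpace 𝕜 G] [CompleteSpace G] (K : Submodule 𝕜 G) [K.HasOrthogonalProjection]
    {T : G →L[𝕜] G} (hT : K ∈ invtSubmodule T) (hT' : K ∈ invtSubmodule T.adjoint) :
    Commute K.starProjection T :=
  (IsIdempotentElem.commute_iff K.isIdempotentElem_starProjection).2
    ⟨by rwa [range_starProjection],
      by rw [ker_starProjection]; exact orthogonal_mem_invtSubmodule hT'⟩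

variable (K : Submodule 𝕜 (WithLp 2 (E × F))) [K.HasOrthogonalProjection]

noncomputable def corner₂₁ : E →L[𝕜] F := sndL 2 𝕜 E F ∘L K.starProjection ∘L inlL

lemma corner₂₁_apply (u : E) : K.corner₂₁ u = (K.starProjection (toLp 2 (u, 0))).snd := rfl

lemma corner₂₁_comp_of_commute {s : E →L[𝕜] E} {r : F →L[𝕜] F}
    (h : Commute K.starProjection (prodMapL s r)) : K.corner₂₁ ∘L s = r ∘L K.corner₂₁ := by
  ext u
  simpa [corner₂₁_apply] using congrArg WithLp.snd (DFunLike.congr_fun h.eq (toLp 2 (u, 0)))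

lemma corner₂₁_comp_of_mem_invtSubmodule [CompleteSpace E] [CompleteSpace F]
    {s : E →L[𝕜] E} {r : F →L[𝕜] F} (h : K ∈ invtSubmodule (prodMapL s r))
    (h' : K ∈ invtSubmodule (prodMapL s.adjoint r.adjoint)) :
    K.corner₂₁ ∘L s = r ∘L K.corner₂₁ :=
  K.corner₂₁_comp_of_commute <|
    K.commute_starProjection_of_mem_invtSubmodule h (by rwa [adjoint_prodMapL])

lemma fst_starProjection_eq_adjoint_corner₂₁ [CompleteSpace E] [CompleteSpace F] (v : F) :
    (K.starProjection (toLp 2 (0, v))).fst = K.corner₂₁.adjoint v := by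
  refine ext_inner_right 𝕜 fun u => ?_
  simpa [corner₂₁_apply, adjoint_inner_left] using
    K.inner_starProjection_left_eq_right (toLp 2 (0, v)) (toLp 2 (u, 0))

lemma mem_of_corner₂₁_eq_zero [CompleteSpace E] [CompleteSpace F] (h : K.corner₂₁ = 0)
    {u : E} {v : F} (huv : toLp 2 (u, v) ∈ K) : toLp 2 (u, 0) ∈ K := by
  have h₁₂ : (K.starProjection (toLp 2 (0, v))).fst = 0 := by
    rw [fst_starProjection_eq_adjoint_corner₂₁, h, map_zero, zero_apply]
  have h₂₁ : (K.starProjection (toLp 2 (u, 0))).snd = 0 := by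
    rw [← corner₂₁_apply, h, zero_apply]
  have h₁₁ : (K.starProjection (toLp 2 (u, 0))).fst = u := by
    have hsplit : toLp 2 (u, v) = toLp 2 (u, 0) + toLp 2 ((0 : E), v) := by simp [← toLp_add]
    have := congrArg WithLp.fst (starProjection_eq_self_iff.2 huv)
    rw [hsplit, map_add, add_fst, h₁₂, add_zero] at this
    simpa using this
  rw [← starProjection_eq_self_iff]
  calc K.starProjection (toLp 2 (u, 0))
      = toLp 2 ((K.starProjection (toLp 2 (u, 0))).fst, (K.starProjection (toLp 2 (u, 0))).snd) :=
        rfl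
    _ = toLp 2 (u, 0) := by rw [h₁₁, h₂₁]

end Submodule

section VonNeumannAlgebra

open Submodule

variable {H : Type*} [NormedAddCommGroup H] [InnerProductSpace ℂ H] [CompleteSpace H]

lemma Submodule.corner₂₁_mem_of_forall_mem_commutant (Q : VonNeumannAlgebra H)
    (K : Submodule ℂ (WithLp 2 (H × H))) [K.HasOrthogonalProjection]
    (hK : ∀ g ∈ Q.commutant, K ∈ invtSubmodule (prodMapL g g)) : K.corner₂₁ ∈ Q := by
  rw [← Q.commutant_commutant, VonNeumannAlgebra.mem_commutant_iff]
  intro g hg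
  refine (K.corner₂₁_comp_of_mem_invtSubmodule (hK g hg) ?_).symm
  simpa only [← star_eq_adjoint] using hK _ (star_mem hg)

variable (Q : VonNeumannAlgebra H) (α : (H →L[ℂ] H) → (H →L[ℂ] H)) (b d : H →L[ℂ] H)

noncomputable def intertwiningSubspace : Submodule ℂ (WithLp 2 (H × H)) :=
  (span ℂ {w | ∃ x ∈ Q, ∃ ξ, w = toLp 2 (x (b ξ), α x (d ξ))}).topologicalClosure

instance : (intertwiningSubspace Q α b d).HasOrthogonalProjection := by
  unfold intertwiningSubspace
  infer_instance

lemma toLp_mem_intertwiningSubspace {x : H →L[ℂ] H} (hx : x ∈ Q) (ξ : H) :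
    toLp 2 (x (b ξ), α x (d ξ)) ∈ intertwiningSubspace Q α b d :=
  le_topologicalClosure _ (subset_span ⟨x, hx, ξ, rfl⟩)

lemma intertwiningSubspace_mem_invtSubmodule
    (hmul : ∀ x ∈ Q, ∀ y ∈ Q, α (x * y) = α x * α y) {x : H →L[ℂ] H} (hx : x ∈ Q) :
    intertwiningSubspace Q α b d ∈ invtSubmodule (prodMapL x (α x)) := by
  refine topologicalClosure_mem_invtSubmodule (mapsTo_span ?_)
  rintro _ ⟨y, hy, ξ, rfl⟩
  exact ⟨x * y, mul_mem hx hy, ξ, by simp [hmul x hx y hy]⟩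

lemma intertwiningSubspace_mem_invtSubmodule_of_mem_commutant (hmem : ∀ x ∈ Q, α x ∈ Q)
    (hb : b ∈ Q) (hd : d ∈ Q) {g : H →L[ℂ] H} (hg : g ∈ Q.commutant) :
    intertwiningSubspace Q α b d ∈ invtSubmodule (prodMapL g g) := by
  refine topologicalClosure_mem_invtSubmodule (mapsTo_span ?_)
  rintro _ ⟨y, hy, ξ, rfl⟩
  have hyb := DFunLike.congr_fun (VonNeumannAlgebra.mem_commutant_iff.1 hg _ (mul_mem hy hb)) ξ
  have hyd := DFunLike.congr_fun
    (VonNeumannAlgebra.mem_commutant_iff.1 hg _ (mul_mem (hmem y hy) hd)) ξ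
  exact ⟨y, hy, g ξ, by simp_all⟩

lemma intertwiningSubspace_le_eqLocus (a c : H →L[ℂ] H)
    (hrel : ∀ x ∈ Q, a * x * b = c * α x * d) :
    intertwiningSubspace Q α b d ≤ (a ∘L fstL 2 ℂ H H).eqLocus (c ∘L sndL 2 ℂ H H) := by
  refine topologicalClosure_minimal _ (span_le.2 ?_) (isClosed_eqLocus _ _)
  rintro _ ⟨x, hx, ξ, rfl⟩
  exact DFunLike.congr_fun (hrel x hx) ξ

end VonNeumannAlgebra

theorem not_properly_outer_of_intertwining_general
    {H : Type*} [NormedAddCommGroup H] [InnerProductSpace ℂ H] [CompleteSpace H]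
    (Q : VonNeumannAlgebra H)
    (α : (H →L[ℂ] H) → (H →L[ℂ] H))
    -- α is a *-automorphism of Q:
    (hmem : ∀ x ∈ Q, α x ∈ Q)
    (hmul : ∀ x ∈ Q, ∀ y ∈ Q, α (x * y) = α x * α y)
    (hstar : ∀ x ∈ Q, α (star x) = star (α x))
    (a b c d : H →L[ℂ] H) (hb : b ∈ Q) (hd : d ∈ Q)
    (hrel : ∀ x ∈ Q, a * x * b = c * α x * d)
    (x₀ : H →L[ℂ] H) (hx₀ : x₀ ∈ Q) (hne : a * x₀ * b ≠ 0) :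
    ∃ t ∈ Q, t ≠ 0 ∧ ∀ x ∈ Q, t * x = α x * t := by
  set K := intertwiningSubspace Q α b d
  refine ⟨K.corner₂₁, K.corner₂₁_mem_of_forall_mem_commutant Q fun g hg =>
    intertwiningSubspace_mem_invtSubmodule_of_mem_commutant Q α b d hmem hb hd hg, ?_, ?_⟩
  · intro ht
    refine hne (ContinuousLinearMap.ext fun ξ => ?_)
    have hmem₀ := K.mem_of_corner₂₁_eq_zero ht (toLp_mem_intertwiningSubspace Q α b d hx₀ ξ)
    simpa using intertwiningSubspace_le_eqLocus Q α b d a c hrel hmem₀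
  · intro x hx
    refine K.corner₂₁_comp_of_mem_invtSubmodule
      (intertwiningSubspace_mem_invtSubmodule Q α b d hmul hx) ?_
    simpa only [← star_eq_adjoint, hstar x hx] using
      intertwiningSubspace_mem_invtSubmodule Q α b d hmul (star_mem hx)

theorem not_properly_outer_of_intertwining
    {H : Type*} [NormedAddCommGroup H] [InnerProductSpace ℂ H] [CompleteSpace H]
    (Q : VonNeumannAlgebra H)
    (α : (H →L[ℂ] H) → (H →L[ℂ] H))
    -- α is a *-automorphism of Q:
    (hmem : ∀ x ∈ Q, α x ∈ Q)
    (hadd : ∀ x ∈ Q, ∀ y ∈ Q, α (x + y) = α x + α y)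
    (hsmul : ∀ (c : ℂ), ∀ x ∈ Q, α (c • x) = c • α x)
    (hmul : ∀ x ∈ Q, ∀ y ∈ Q, α (x * y) = α x * α y)
    (hstar : ∀ x ∈ Q, α (star x) = star (α x))
    (hone : α 1 = 1)
    (hinj : ∀ x ∈ Q, ∀ y ∈ Q, α x = α y → x = y)
    (hsurj : ∀ y ∈ Q, ∃ x ∈ Q, α x = y)
    (a b c d : H →L[ℂ] H) (ha : a ∈ Q) (hb : b ∈ Q) (hc : c ∈ Q) (hd : d ∈ Q)
    (hrel : ∀ x ∈ Q, a * x * b = c * α x * d)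
    (x₀ : H →L[ℂ] H) (hx₀ : x₀ ∈ Q) (hne : a * x₀ * b ≠ 0) :
    ∃ t ∈ Q, t ≠ 0 ∧ ∀ x ∈ Q, t * x = α x * t :=
  not_properly_outer_of_intertwining_general Q α hmem hmul hstar a b c d hb hd hrel x₀ hx₀ hne
end

section
/- Let G be a discrete group acting on a factor M by outer automorphisms α_g. If w ∈ M ⋊_α G is a unitary normalizing M (i.e., w*Mw = M), then there exist a unique g₀ ∈ G and a unitary u ∈ M such that w = u·λ_{g₀}. -/
/- STATEMENT 13: Let G be a discrete group acting on a factor M by outer automorphisms α_g.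
If w ∈ M ⋊_α G is a unitary normalizing M (w* M w = M), then there exist a unique g₀ ∈ G and
a unitary u ∈ M such that w = u·λ_{g₀}. -/

noncomputable section

/-! Write `w_g = E(w λ_g*)` for the Fourier coefficients of `w`. Some `w_{g₀}` is nonzero, and
bimodularity of `E` makes it intertwine the identity of `M` with `Ad (λ_{g₀} w*)`. In a factor a
nonzero intertwiner is a scalar multiple of a unitary, so `Ad (λ_{g₀} w*) = Ad u` on `M` for a
unitary `u ∈ M`, i.e. `z = u* λ_{g₀} w*` commutes with `M`. By the same argument the coefficients
`E(z λ_g*)`, `g ≠ 1`, vanish because `α_g` is outer, so `z` is the scalar `E z` and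
`w = z* u* λ_{g₀}`. Uniqueness: `u λ_g = u' λ_{g'}` puts `λ_{g' g⁻¹} = u'* u` in `M`, which makes
`α_{g' g⁻¹}` inner. -/

open scoped ComplexOrder

lemma commute_star_mul_of_conj_eq {A : Type*} [Monoid A] [StarMul A] {Λ u x : A}
    (hΛ : Λ ∈ unitary A) (hu : u ∈ unitary A) (h : Λ * x * star Λ = u * x * star u) :
    Commute (star u * Λ) x :=
  calc star u * Λ * x = star u * (Λ * x * star Λ) * Λ := by
        simp only [mul_assoc, Unitary.star_mul_self_of_mem hΛ, mul_one]
    _ = x * (star u * Λ) := by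
        rw [h]
        simp only [← mul_assoc, Unitary.star_mul_self_of_mem hu, one_mul]

section

variable {H : Type*} [NormedAddCommGroup H] [InnerProductSpace ℂ H]

lemma nonneg_of_smul_one_nonneg [Nontrivial H] {c : ℂ} (hc : 0 ≤ c • (1 : H →L[ℂ] H)) :
    0 ≤ c := by
  rw [ContinuousLinearMap.nonneg_iff_isPositive,
    ← ContinuousLinearMap.isPositive_toLinearMap_iff] at hc
  exact (LinearMap.isPositive_one.isPositive_smul_iff one_ne_zero).mp hc

variable [CompleteSpace H]

lemma exists_smul_mem_unitary {v : H →L[ℂ] H} (hv : v ≠ 0) {c c' : ℂ}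
    (hc : star v * v = c • 1) (hc' : v * star v = c' • 1) :
    ∃ r : ℂ, r • v ∈ unitary (H →L[ℂ] H) := by
  have : Nontrivial H := by
    by_contra h
    rw [not_nontrivial_iff_subsingleton] at h
    exact hv (Subsingleton.elim _ _)
  have hc'c : c' = c := by
    have h : (v * star v) * v = v * (star v * v) := mul_assoc _ _ _
    rw [hc, hc', smul_one_mul, mul_smul_one] at h
    exact smul_left_injective ℂ hv h
  have hc_pos : 0 < c := by
    refine lt_of_le_of_ne (nonneg_of_smul_one_nonneg (hc ▸ star_mul_self_nonneg v)) ?_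
    rintro rfl
    exact hv ((CStarRing.star_mul_self_eq_zero_iff v).mp (by simpa using hc))
  obtain ⟨hre, him⟩ := Complex.pos_iff.mp hc_pos
  obtain ⟨r, hr⟩ : ∃ r : ℝ, (r * r * c : ℂ) = 1 := by
    refine ⟨(√c.re)⁻¹, ?_⟩
    rw [show c = (c.re : ℂ) from Complex.ext rfl (by simp [him])]
    norm_cast
    field_simp
    exact (Real.sq_sqrt hre.le).symm
  refine ⟨r, ?_, ?_⟩ <;>
  · rw [star_smul, Complex.star_def, Complex.conj_ofReal, smul_mul_smul_comm]
    simp only [hc, hc', hc'c, smul_smul, hr, one_smul]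

def unitaryNormalizer (M : StarSubalgebra ℂ (H →L[ℂ] H)) : Submonoid (H →L[ℂ] H) where
  carrier := {Λ | Λ ∈ unitary (H →L[ℂ] H) ∧ ∀ x ∈ M, Λ * x * star Λ ∈ M ∧ star Λ * x * Λ ∈ M}
  mul_mem' {a b} ha hb := by
    refine ⟨Submonoid.mul_mem _ ha.1 hb.1, fun x hx => ⟨?_, ?_⟩⟩
    · simpa only [star_mul, mul_assoc] using (ha.2 _ (hb.2 x hx).1).1
    · simpa only [star_mul, mul_assoc] using (hb.2 _ (ha.2 x hx).2).2
  one_mem' := ⟨Submonoid.one_mem _, fun x hx => by simpa using hx⟩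

def HasTrivialCenter (M : StarSubalgebra ℂ (H →L[ℂ] H)) : Prop :=
  ∀ z ∈ M, (∀ x ∈ M, z * x = x * z) → ∃ c : ℂ, z = c • (1 : H →L[ℂ] H)

def IsInnerOn (M : StarSubalgebra ℂ (H →L[ℂ] H)) (Λ : H →L[ℂ] H) : Prop :=
  ∃ u ∈ M, u ∈ unitary (H →L[ℂ] H) ∧ ∀ x ∈ M, Λ * x * star Λ = u * x * star u

variable {M : StarSubalgebra ℂ (H →L[ℂ] H)}

lemma star_mem_unitaryNormalizer {Λ : H →L[ℂ] H} (hΛ : Λ ∈ unitaryNormalizer M) :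
    star Λ ∈ unitaryNormalizer M :=
  ⟨Unitary.star_mem hΛ.1, fun x hx => by simpa only [star_star, and_comm] using hΛ.2 x hx⟩

lemma mem_unitaryNormalizer_of_commute {z : H →L[ℂ] H} (hz : z ∈ unitary (H →L[ℂ] H))
    (hcomm : ∀ x ∈ M, z * x = x * z) : z ∈ unitaryNormalizer M := by
  refine ⟨hz, fun x hx => ⟨?_, ?_⟩⟩
  · rwa [hcomm x hx, mul_assoc, Unitary.mul_star_self_of_mem hz, mul_one]
  · rwa [mul_assoc, ← hcomm x hx, ← mul_assoc, Unitary.star_mul_self_of_mem hz, one_mul]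

lemma isInnerOn_of_intertwines
    (hfactor : HasTrivialCenter M)
    {Λ v : H →L[ℂ] H} (hΛ : Λ ∈ unitaryNormalizer M) (hvM : v ∈ M) (hv : v ≠ 0)
    (hrel : ∀ x ∈ M, x * v = v * (Λ * x * star Λ)) : IsInnerOn M Λ := by
  have hrel_star : ∀ x ∈ M, star v * x = (Λ * x * star Λ) * star v := fun x hx => by
    simpa only [star_mul, star_star, mul_assoc] using congr_arg star (hrel (star x) (star_mem hx))
  have hΛΛ : Λ * star Λ = 1 := Unitary.mul_star_self_of_mem hΛ.1
  have h_conj_surj : ∀ y ∈ M, Λ * (star Λ * y * Λ) * star Λ = y := fun y _ => by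
    simp only [mul_assoc, hΛΛ, mul_one]; rw [← mul_assoc, hΛΛ, one_mul]
  obtain ⟨c, hc⟩ := hfactor (star v * v) (mul_mem (star_mem hvM) hvM) fun y hy => by
    obtain ⟨x, hx, rfl⟩ : ∃ x ∈ M, Λ * x * star Λ = y := ⟨_, (hΛ.2 y hy).2, h_conj_surj y hy⟩
    rw [mul_assoc, ← hrel x hx, ← mul_assoc, hrel_star x hx, mul_assoc]
  obtain ⟨c', hc'⟩ := hfactor (v * star v) (mul_mem hvM (star_mem hvM)) fun x hx => by
    rw [mul_assoc, hrel_star x hx, ← mul_assoc, ← hrel x hx, mul_assoc]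
  obtain ⟨r, hr⟩ := exists_smul_mem_unitary hv hc hc'
  set U := r • v
  have hU : ∀ x ∈ M, x * U = U * (Λ * x * star Λ) := fun x hx => by
    rw [mul_smul_comm, hrel x hx, smul_mul_assoc]
  refine ⟨star U, star_mem (M.smul_mem hvM r), Unitary.star_mem hr, fun x hx => ?_⟩
  calc Λ * x * star Λ = star U * (U * (Λ * x * star Λ)) := by
        rw [← mul_assoc, Unitary.star_mul_self_of_mem hr, one_mul]
    _ = star U * x * star (star U) := by rw [← hU x hx, star_star, mul_assoc]

variable {N : StarSubalgebra ℂ (H →L[ℂ] H)} {E : (H →L[ℂ] H) →ₗ[ℂ] (H →L[ℂ] H)}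

lemma expectation_intertwines
    (hbimod : ∀ m₁ ∈ M, ∀ m₂ ∈ M, ∀ x ∈ N, E (m₁ * x * m₂) = m₁ * E x * m₂)
    {Λ y : H →L[ℂ] H} (hΛ : ∀ x ∈ M, Λ * x * star Λ ∈ M) (hy : y ∈ N)
    (hrel : ∀ x ∈ M, x * y = y * (Λ * x * star Λ)) (x : H →L[ℂ] H) (hx : x ∈ M) :
    x * E y = E y * (Λ * x * star Λ) :=
  calc x * E y = E (x * y * 1) := by rw [hbimod x hx 1 M.one_mem y hy, mul_one]
    _ = E (1 * y * (Λ * x * star Λ)) := by rw [mul_one, one_mul, hrel x hx]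
    _ = E y * (Λ * x * star Λ) := by rw [hbimod 1 M.one_mem _ (hΛ x hx) y hy, one_mul]

lemma isInnerOn_of_expectation_star_ne_zero
    (hfactor : HasTrivialCenter M)
    (hbimod : ∀ m₁ ∈ M, ∀ m₂ ∈ M, ∀ x ∈ N, E (m₁ * x * m₂) = m₁ * E x * m₂)
    (hrange : ∀ x ∈ N, E x ∈ M) {Λ : H →L[ℂ] H} (hΛ : Λ ∈ unitaryNormalizer M) (hΛN : Λ ∈ N)
    (hE : E (star Λ) ≠ 0) : IsInnerOn M Λ :=
  isInnerOn_of_intertwines hfactor hΛ (hrange _ (star_mem hΛN)) hE <|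
    expectation_intertwines hbimod (fun x hx => (hΛ.2 x hx).1) (star_mem hΛN) fun x _ => by
      rw [← mul_assoc, ← mul_assoc, Unitary.star_mul_self_of_mem hΛ.1, one_mul]

lemma expectation_mul_star_eq_zero_of_not_isInnerOn
    (hfactor : HasTrivialCenter M)
    (hbimod : ∀ m₁ ∈ M, ∀ m₂ ∈ M, ∀ x ∈ N, E (m₁ * x * m₂) = m₁ * E x * m₂)
    (hrange : ∀ x ∈ N, E x ∈ M) {Λ z : H →L[ℂ] H} (hΛ : Λ ∈ unitaryNormalizer M) (hΛN : Λ ∈ N)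
    (hout : ¬ IsInnerOn M Λ) (hz : z ∈ unitary (H →L[ℂ] H)) (hzN : z ∈ N)
    (hcomm : ∀ x ∈ M, z * x = x * z) : E (z * star Λ) = 0 := by
  by_contra hE
  have hz' := mem_unitaryNormalizer_of_commute hz hcomm
  obtain ⟨u, huM, hu, hAd⟩ := isInnerOn_of_expectation_star_ne_zero hfactor hbimod hrange
    (mul_mem hΛ (star_mem_unitaryNormalizer hz')) (mul_mem hΛN (star_mem hzN))
    (by rwa [star_mul, star_star])
  refine hout ⟨u, huM, hu, fun x hx => ?_⟩
  have hzx : star z * x * z = x := by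
    rw [mul_assoc, ← hcomm x hx, ← mul_assoc, Unitary.star_mul_self_of_mem hz, one_mul]
  rw [← hAd x hx, star_mul, star_star]
  conv_lhs => rw [← hzx]
  simp only [mul_assoc]

variable {G : Type*} [Group G] {lam : G → H →L[ℂ] H}

lemma star_lam_eq (hlamU : ∀ g, lam g ∈ unitary (H →L[ℂ] H)) (hlamone : lam 1 = 1)
    (hlammul : ∀ g h, lam g * lam h = lam (g * h)) (g : G) : star (lam g) = lam g⁻¹ :=
  left_inv_eq_right_inv (Unitary.star_mul_self_of_mem (hlamU g))
    (by rw [hlammul, mul_inv_cancel, hlamone])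

lemma lam_mem_unitaryNormalizer (hlamU : ∀ g, lam g ∈ unitary (H →L[ℂ] H))
    (hstar : ∀ g, star (lam g) = lam g⁻¹) (hcov : ∀ g, ∀ x ∈ M, lam g * x * star (lam g) ∈ M)
    (g : G) : lam g ∈ unitaryNormalizer M := by
  refine ⟨hlamU g, fun x hx => ⟨hcov g x hx, ?_⟩⟩
  have h := hcov g⁻¹ x hx
  rwa [hstar g⁻¹, inv_inv, ← hstar g] at h

lemma eq_smul_one_of_commute
    (hfactor : HasTrivialCenter M)
    (hbimod : ∀ m₁ ∈ M, ∀ m₂ ∈ M, ∀ x ∈ N, E (m₁ * x * m₂) = m₁ * E x * m₂)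
    (hrange : ∀ x ∈ N, E x ∈ M) (hid : ∀ m ∈ M, E m = m)
    (hsep : ∀ x ∈ N, (∀ g : G, E (x * star (lam g)) = 0) → x = 0)
    (hlam : ∀ g, lam g ∈ unitaryNormalizer M) (hlamN : ∀ g, lam g ∈ N) (hlamone : lam 1 = 1)
    (hout : ∀ g ≠ 1, ¬ IsInnerOn M (lam g))
    {z : H →L[ℂ] H} (hz : z ∈ unitary (H →L[ℂ] H)) (hzN : z ∈ N)
    (hcomm : ∀ x ∈ M, z * x = x * z) : ∃ c : ℂ, z = c • 1 := by
  have hcoeff {y : H →L[ℂ] H} (hy : y ∈ unitary (H →L[ℂ] H)) (hyN : y ∈ N)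
      (hy_comm : ∀ x ∈ M, y * x = x * y) {g : G} (hg : g ≠ 1) : E (y * star (lam g)) = 0 :=
    expectation_mul_star_eq_zero_of_not_isInnerOn hfactor hbimod hrange (hlam g) (hlamN g)
      (hout g hg) hy hyN hy_comm
  obtain ⟨c, hc⟩ := hfactor (E z) (hrange z hzN) fun x hx => by
    simpa using (expectation_intertwines hbimod (Λ := 1) (by simp) hzN
      (fun x hx => by simp [hcomm x hx]) x hx).symm
  refine ⟨c, sub_eq_zero.mp (hsep _ (sub_mem hzN (N.smul_mem N.one_mem c)) fun g => ?_)⟩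
  rcases eq_or_ne g 1 with rfl | hg
  · simp [hlamone, hc, hid 1 M.one_mem]
  · have h1 : E (star (lam g)) = 0 := by
      simpa using hcoeff (Submonoid.one_mem _) N.one_mem (by simp) hg
    simp [sub_mul, hcoeff hz hzN hcomm hg, h1]

lemma exists_eq_unitary_mul_lam
    (hfactor : HasTrivialCenter M) (hMN : M ≤ N)
    (hbimod : ∀ m₁ ∈ M, ∀ m₂ ∈ M, ∀ x ∈ N, E (m₁ * x * m₂) = m₁ * E x * m₂)
    (hrange : ∀ x ∈ N, E x ∈ M) (hid : ∀ m ∈ M, E m = m)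
    (hsep : ∀ x ∈ N, (∀ g : G, E (x * star (lam g)) = 0) → x = 0)
    (hlam : ∀ g, lam g ∈ unitaryNormalizer M) (hlamN : ∀ g, lam g ∈ N) (hlamone : lam 1 = 1)
    (hout : ∀ g ≠ 1, ¬ IsInnerOn M (lam g))
    {w : H →L[ℂ] H} (hw : w ∈ unitaryNormalizer M) (hwN : w ∈ N) :
    ∃ g₀ : G, ∃ u ∈ M, u ∈ unitary (H →L[ℂ] H) ∧ w = u * lam g₀ := by
  by_cases hcoeff : ∀ g, E (w * star (lam g)) = 0
  · have h10 : (1 : H →L[ℂ] H) = 0 := by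
      rw [← Unitary.star_mul_self_of_mem hw.1, hsep w hwN hcoeff, mul_zero]
    have := subsingleton_of_zero_eq_one h10.symm
    exact ⟨1, 1, M.one_mem, Submonoid.one_mem _, Subsingleton.elim _ _⟩
  push Not at hcoeff
  obtain ⟨g₀, hg₀⟩ := hcoeff
  set Λ := lam g₀ * star w
  have hΛ : Λ ∈ unitaryNormalizer M := mul_mem (hlam g₀) (star_mem_unitaryNormalizer hw)
  obtain ⟨u, huM, hu, hAd⟩ := isInnerOn_of_expectation_star_ne_zero hfactor hbimod hrange hΛ
    (mul_mem (hlamN g₀) (star_mem hwN)) (by rwa [star_mul, star_star])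
  have hz : star u * Λ ∈ unitary (H →L[ℂ] H) := mul_mem (Unitary.star_mem hu) hΛ.1
  have hzN : star u * Λ ∈ N := mul_mem (star_mem (hMN huM)) (mul_mem (hlamN g₀) (star_mem hwN))
  have hcomm : ∀ x ∈ M, star u * Λ * x = x * (star u * Λ) := fun x hx =>
    (commute_star_mul_of_conj_eq hΛ.1 hu (hAd x hx)).eq
  obtain ⟨c, hc⟩ := eq_smul_one_of_commute hfactor hbimod hrange hid hsep hlam hlamN hlamone
    hout hz hzN hcomm
  refine ⟨g₀, star (star u * Λ) * star u, mul_mem ?_ (star_mem huM),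
    mul_mem (Unitary.star_mem hz) (Unitary.star_mem hu), ?_⟩
  · rw [hc, star_smul, star_one]
    exact M.smul_mem M.one_mem _
  · simp only [Λ, star_mul, star_star, mul_assoc, Unitary.mul_star_self_of_mem hu,
      Unitary.star_mul_self_of_mem (hlam g₀).1, mul_one]

lemma eq_of_mul_lam_eq (hlamU : ∀ g, lam g ∈ unitary (H →L[ℂ] H))
    (hstar : ∀ g, star (lam g) = lam g⁻¹) (hlammul : ∀ g h, lam g * lam h = lam (g * h))
    (hout : ∀ g ≠ 1, ¬ IsInnerOn M (lam g)) {g g' : G} {u u' : H →L[ℂ] H} (huM : u ∈ M)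
    (hu'M : u' ∈ M) (hu' : u' ∈ unitary (H →L[ℂ] H)) (h : u * lam g = u' * lam g') : g = g' := by
  by_contra hne
  have hlam_eq : lam (g' * g⁻¹) = star u' * u :=
    calc lam (g' * g⁻¹) = star u' * (u' * lam g') * star (lam g) := by
          rw [← mul_assoc, Unitary.star_mul_self_of_mem hu', one_mul, hstar, hlammul]
      _ = star u' * u := by
          rw [← h, mul_assoc, mul_assoc, Unitary.mul_star_self_of_mem (hlamU g), mul_one]
  refine hout (g' * g⁻¹) (mul_inv_eq_one.not.mpr (Ne.symm hne))
    ⟨lam (g' * g⁻¹), ?_, hlamU _, fun _ _ => rfl⟩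
  rw [hlam_eq]
  exact mul_mem (star_mem hu'M) huM

end

theorem unitary_normalizer_eq_unitary_mul_lam_general
    {H : Type*} [NormedAddCommGroup H] [InnerProductSpace ℂ H] [CompleteSpace H]
    (G : Type*) [Group G]
    -- M ⊆ N, M a factor; N plays the role of the crossed product M ⋊_α G:
    (M N : VonNeumannAlgebra H) (hMN : (M : Set (H →L[ℂ] H)) ⊆ N)
    (hfactor : ∀ z ∈ M, (∀ x ∈ M, z * x = x * z) → ∃ c : ℂ, z = c • (1 : H →L[ℂ] H))
    -- the canonical unitaries λ_g implementing the action α_g = Ad λ_g on M: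
    (lam : G → (H →L[ℂ] H))
    (hlamN : ∀ g, lam g ∈ N)
    (hlamU : ∀ g, star (lam g) * lam g = 1 ∧ lam g * star (lam g) = 1)
    (hlamone : lam 1 = 1)
    (hlammul : ∀ g h, lam g * lam h = lam (g * h))
    (hcov : ∀ g, ∀ x ∈ M, lam g * x * star (lam g) ∈ M)
    -- α_g ∘ α_h⁻¹ is an outer automorphism of M whenever g ≠ h:
    (houter : ∀ g h : G, g ≠ h →
      ¬ ∃ u ∈ M, star u * u = 1 ∧ u * star u = 1 ∧
          ∀ x ∈ M, lam g * (star (lam h) * x * lam h) * star (lam g) = u * x * star u)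
    -- E is the canonical (faithful, normal) conditional expectation of N onto M:
    (E : (H →L[ℂ] H) →ₗ[ℂ] (H →L[ℂ] H))
    (hrange : ∀ x ∈ N, E x ∈ M)
    (hid : ∀ m ∈ M, E m = m)
    (hbimod : ∀ m₁ ∈ M, ∀ m₂ ∈ M, ∀ x ∈ N, E (m₁ * x * m₂) = m₁ * E x * m₂)
    -- the Fourier coefficients x_g = E(x λ_g*) separate the points of N:
    (hsep : ∀ x ∈ N, (∀ g : G, E (x * star (lam g)) = 0) → x = 0)
    -- w is a unitary of N normalizing M:
    (w : H →L[ℂ] H) (hwN : w ∈ N)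
    (hwU : star w * w = 1 ∧ w * star w = 1)
    (hwnorm : ∀ x ∈ M, star w * x * w ∈ M ∧ w * x * star w ∈ M) :
    ∃! g₀ : G, ∃ u ∈ M, star u * u = 1 ∧ u * star u = 1 ∧ w = u * lam g₀ := by
  have hstar := star_lam_eq hlamU hlamone hlammul
  have hlam := lam_mem_unitaryNormalizer (M := M.toStarSubalgebra) hlamU hstar hcov
  have hout : ∀ g ≠ 1, ¬ IsInnerOn M.toStarSubalgebra (lam g) := fun g hg ⟨u, huM, hu, hAd⟩ =>
    houter g 1 hg ⟨u, huM, hu.1, hu.2, fun x hx => by simpa [hlamone] using hAd x hx⟩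
  obtain ⟨g₀, u, huM, hu, rfl⟩ := exists_eq_unitary_mul_lam hfactor hMN hbimod hrange hid hsep
    hlam hlamN hlamone hout ⟨hwU, fun x hx => (hwnorm x hx).symm⟩ hwN
  refine ⟨g₀, ⟨u, huM, hu.1, hu.2, rfl⟩, fun g ⟨u', hu'M, hu'₁, hu'₂, h⟩ => ?_⟩
  exact (eq_of_mul_lam_eq hlamU hstar hlammul hout huM hu'M ⟨hu'₁, hu'₂⟩ h).symm

theorem unitary_normalizer_eq_unitary_mul_lam
    {H : Type*} [NormedAddCommGroup H] [InnerProductSpace ℂ H] [CompleteSpace H]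
    (G : Type*) [Group G]
    -- M ⊆ N, M a factor; N plays the role of the crossed product M ⋊_α G:
    (M N : VonNeumannAlgebra H) (hMN : (M : Set (H →L[ℂ] H)) ⊆ N)
    (hfactor : ∀ z ∈ M, (∀ x ∈ M, z * x = x * z) → ∃ c : ℂ, z = c • (1 : H →L[ℂ] H))
    -- the canonical unitaries λ_g implementing the action α_g = Ad λ_g on M:
    (lam : G → (H →L[ℂ] H))
    (hlamN : ∀ g, lam g ∈ N)
    (hlamU : ∀ g, star (lam g) * lam g = 1 ∧ lam g * star (lam g) = 1)
    (hlamone : lam 1 = 1)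
    (hlammul : ∀ g h, lam g * lam h = lam (g * h))
    (hcov : ∀ g, ∀ x ∈ M, lam g * x * star (lam g) ∈ M)
    -- α_g ∘ α_h⁻¹ is an outer automorphism of M whenever g ≠ h:
    (houter : ∀ g h : G, g ≠ h →
      ¬ ∃ u ∈ M, star u * u = 1 ∧ u * star u = 1 ∧
          ∀ x ∈ M, lam g * (star (lam h) * x * lam h) * star (lam g) = u * x * star u)
    -- E is the canonical (faithful, normal) conditional expectation of N onto M:
    (E : (H →L[ℂ] H) →ₗ[ℂ] (H →L[ℂ] H))
    (hrange : ∀ x ∈ N, E x ∈ M)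
    (hid : ∀ m ∈ M, E m = m)
    (hbimod : ∀ m₁ ∈ M, ∀ m₂ ∈ M, ∀ x ∈ N, E (m₁ * x * m₂) = m₁ * E x * m₂)
    (hpos : ∀ x ∈ N, (E (star x * x)).IsPositive)
    (hfaithful : ∀ x ∈ N, E (star x * x) = 0 → x = 0)
    (hnormal : @Continuous _ _ (sigmaWeak H) (sigmaWeak H) E)
    -- the Fourier coefficients x_g = E(x λ_g*) separate the points of N:
    (hsep : ∀ x ∈ N, (∀ g : G, E (x * star (lam g)) = 0) → x = 0)
    -- w is a unitary of N normalizing M: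
    (w : H →L[ℂ] H) (hwN : w ∈ N)
    (hwU : star w * w = 1 ∧ w * star w = 1)
    (hwnorm : ∀ x ∈ M, star w * x * w ∈ M ∧ w * x * star w ∈ M) :
    ∃! g₀ : G, ∃ u ∈ M, star u * u = 1 ∧ u * star u = 1 ∧ w = u * lam g₀ :=
  unitary_normalizer_eq_unitary_mul_lam_general G M N hMN hfactor lam hlamN hlamU hlamone hlammul
    hcov houter E hrange hid hbimod hsep w hwN hwU hwnorm

end
end
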